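/- The modular S and T matrices of the Z_N topological order satisfy (ST)³ = S², where S_{(α,β),(α',β')} = (1/N)exp(2πi(αβ'+βα')/N) and T_{(α,β),(α',β')} = exp(−2πi αβ/N)·δ_{(α,β),(α',β')}. -/

import Mathlib

/-!
For a primitive additive character `ψ` of `R` (here `ψ = ZMod.stdAddChar`), the identity
`S T S = T⁻¹ S T⁻¹` is a Gauss-sum computation: in `∑_y S x y T y S y z` the sum over `y.2`
is a character sum that vanishes unless `y.1 = x.1 + z.1`, and what survives is
`ψ((x.1 + z.1)(x.2 + z.2)) = T⁻¹ x · |R| S x z · T⁻¹ z`. Hence `(ST)³ = T⁻¹ S² T`.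
By the same orthogonality `S²` is the charge conjugation `x ↦ -x`, which commutes with `T`
because `T` only sees `x.1 * x.2`.
-/

open Matrix

namespace ModularData

variable {R K : Type*} [CommRing R] [Fintype R] [DecidableEq R] [Field K] (ψ : AddChar R K)

noncomputable def sMatrix : Matrix (R × R) (R × R) K :=
  of fun x y => (Fintype.card R : K)⁻¹ * ψ (x.1 * y.2 + x.2 * y.1)

noncomputable def tMatrix : Matrix (R × R) (R × R) K :=
  diagonal fun x => ψ (-(x.1 * x.2))

noncomputable def tInvMatrix : Matrix (R × R) (R × R) K :=
  diagonal fun x => ψ (x.1 * x.2)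

noncomputable def chargeConj : Matrix (R × R) (R × R) K :=
  of fun x z => if x + z = 0 then 1 else 0

lemma tInvMatrix_mul_tMatrix : tInvMatrix ψ * tMatrix ψ = 1 := by
  simp only [tInvMatrix, tMatrix, diagonal_mul_diagonal, ← AddChar.map_add_eq_mul,
    add_neg_cancel, AddChar.map_zero_eq_one, diagonal_one]

lemma tInvMatrix_mul_chargeConj_mul_tMatrix :
    tInvMatrix ψ * chargeConj * tMatrix ψ = (chargeConj : Matrix (R × R) (R × R) K) := by
  ext x z
  simp only [tInvMatrix, tMatrix, chargeConj, diagonal_mul, mul_diagonal, of_apply]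
  split_ifs with h
  · rw [eq_neg_of_add_eq_zero_right h, mul_one, ← AddChar.map_add_eq_mul]
    simp
  · simp

variable {ψ}

lemma sum_prod_eq_card_mul_sum_ite (hψ : ψ.IsPrimitive) (f g : R → R) :
    ∑ y : R × R, ψ (f y.1 + y.2 * g y.1) =
      Fintype.card R * ∑ a : R, if g a = 0 then ψ (f a) else 0 := by
  rw [Fintype.sum_prod_type, Finset.mul_sum]
  refine Finset.sum_congr rfl fun a _ => ?_
  simp only [AddChar.map_add_eq_mul, ← Finset.mul_sum, AddChar.sum_mulShift _ hψ]
  split_ifs <;> ring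

variable [CharZero K]

lemma sMatrix_mul_self (hψ : ψ.IsPrimitive) : sMatrix ψ * sMatrix ψ = chargeConj := by
  ext x z
  have hterm : ∀ y : R × R, sMatrix ψ x y * sMatrix ψ y z =
      (Fintype.card R : K)⁻¹ ^ 2 * ψ (y.1 * (x.2 + z.2) + y.2 * (x.1 + z.1)) := by
    intro y
    rw [show y.1 * (x.2 + z.2) + y.2 * (x.1 + z.1)
        = (x.1 * y.2 + x.2 * y.1) + (y.1 * z.2 + y.2 * z.1) by ring]
    simp only [sMatrix, of_apply, AddChar.map_add_eq_mul]
    ring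
  rw [mul_apply, Finset.sum_congr rfl fun y _ => hterm y, ← Finset.mul_sum,
    sum_prod_eq_card_mul_sum_ite hψ (fun a => a * (x.2 + z.2)) (fun _ => x.1 + z.1)]
  simp only [Finset.sum_ite_irrel, AddChar.sum_mulShift _ hψ, Finset.sum_const_zero,
    chargeConj, of_apply, Prod.ext_iff, Prod.fst_add, Prod.snd_add, Prod.fst_zero, Prod.snd_zero]
  split_ifs <;> simp_all
  field_simp

lemma sMatrix_mul_tMatrix_mul_sMatrix (hψ : ψ.IsPrimitive) :
    sMatrix ψ * tMatrix ψ * sMatrix ψ = tInvMatrix ψ * sMatrix ψ * tInvMatrix ψ := by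
  ext x z
  have hterm : ∀ y : R × R, (sMatrix ψ * tMatrix ψ) x y * sMatrix ψ y z =
      (Fintype.card R : K)⁻¹ ^ 2 * ψ (y.1 * (x.2 + z.2) + y.2 * (x.1 + z.1 - y.1)) := by
    intro y
    rw [show y.1 * (x.2 + z.2) + y.2 * (x.1 + z.1 - y.1)
        = (x.1 * y.2 + x.2 * y.1) + -(y.1 * y.2) + (y.1 * z.2 + y.2 * z.1) by ring]
    simp only [tMatrix, mul_diagonal, sMatrix, of_apply, AddChar.map_add_eq_mul]
    ring
  rw [mul_apply, Finset.sum_congr rfl fun y _ => hterm y, ← Finset.mul_sum,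
    sum_prod_eq_card_mul_sum_ite hψ (fun a => a * (x.2 + z.2)) (fun a => x.1 + z.1 - a)]
  simp only [sub_eq_zero, Finset.sum_ite_eq, Finset.mem_univ, if_true]
  rw [show (x.1 + z.1) * (x.2 + z.2) = x.1 * x.2 + (x.1 * z.2 + x.2 * z.1) + z.1 * z.2 by ring]
  simp only [tInvMatrix, sMatrix, diagonal_mul, mul_diagonal, of_apply, AddChar.map_add_eq_mul]
  field_simp

theorem sMatrix_mul_tMatrix_pow_three (hψ : ψ.IsPrimitive) :
    (sMatrix ψ * tMatrix ψ) ^ 3 = sMatrix ψ ^ 2 :=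
  calc (sMatrix ψ * tMatrix ψ) ^ 3
      = sMatrix ψ * tMatrix ψ * sMatrix ψ * tMatrix ψ * sMatrix ψ * tMatrix ψ := by
        simp only [pow_succ, pow_zero, Matrix.one_mul, Matrix.mul_assoc]
    _ = tInvMatrix ψ * sMatrix ψ * (tInvMatrix ψ * tMatrix ψ) * sMatrix ψ * tMatrix ψ := by
      rw [sMatrix_mul_tMatrix_mul_sMatrix hψ]
      simp only [Matrix.mul_assoc]
    _ = tInvMatrix ψ * (sMatrix ψ * sMatrix ψ) * tMatrix ψ := by
      rw [tInvMatrix_mul_tMatrix, Matrix.mul_one]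
      simp only [Matrix.mul_assoc]
    _ = sMatrix ψ ^ 2 := by
      rw [sMatrix_mul_self hψ, tInvMatrix_mul_chargeConj_mul_tMatrix, sq, sMatrix_mul_self hψ]

end ModularData

open Complex in
/-- The modular S and T matrices of the `Z_N` topological order satisfy `(ST)³ = S²`,
where `S_{(α,β),(α',β')} = (1/N) exp (2πi (αβ' + βα')/N)` and
`T_{(α,β),(α',β')} = exp (−2πi αβ/N) δ_{(α,β),(α',β')}`. -/
theorem stmt_15 (N : ℕ) [NeZero N] :
    let S : Matrix (ZMod N × ZMod N) (ZMod N × ZMod N) ℂ :=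
      Matrix.of fun x y =>
        (1 / (N : ℂ)) * Complex.exp (2 * Real.pi * I *
          ((x.1.val : ℂ) * (y.2.val : ℂ) + (x.2.val : ℂ) * (y.1.val : ℂ)) / (N : ℂ))
    let T : Matrix (ZMod N × ZMod N) (ZMod N × ZMod N) ℂ :=
      Matrix.diagonal fun x =>
        Complex.exp (-(2 * Real.pi * I) * ((x.1.val : ℂ) * (x.2.val : ℂ)) / (N : ℂ))
    (S * T) ^ 3 = S ^ 2 := by
  intro S T
  have hS : S = ModularData.sMatrix ZMod.stdAddChar := by
    ext x y
    have hval : x.1 * y.2 + x.2 * y.1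
        = ((x.1.val * y.2.val + x.2.val * y.1.val : ℤ) : ZMod N) := by simp
    simp only [S, ModularData.sMatrix, Matrix.of_apply, ZMod.card, one_div, hval,
      ZMod.stdAddChar_coe]
    push_cast
    rfl
  have hT : T = ModularData.tMatrix ZMod.stdAddChar := by
    refine congrArg Matrix.diagonal (funext fun x => ?_)
    have hval : -(x.1 * x.2) = ((-(x.1.val * x.2.val) : ℤ) : ZMod N) := by simp
    rw [hval, ZMod.stdAddChar_coe]
    push_cast
    ring_nf
  rw [hS, hT]
  exact ModularData.sMatrix_mul_tMatrix_pow_three (ZMod.isPrimitive_stdAddChar N)
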